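/- Let g_a, g_b ∈ ℝ^d, p_a, p_b ∈ [0,1] with p_a + p_b = 1, and set g = p_a·g_a + p_b·g_b. Suppose ‖g_a‖·p_a·(1 − p_a/2) ≥ (5/2)·C + ‖g_b‖·(1 + p_b + p_b²/2) for some C > 0. Then for any vector ḡ ∈ ℝ^d that is a convex-type combination ḡ = p_a·ḡ_a + p_b·ḡ_b with ‖ḡ_a‖ ≤ C and ‖ḡ_b‖ ≤ C, we have ⟨g_a − g_b, g − ḡ⟩ − (1/2)(‖g‖² + C²) ≥ (C/2)·(‖g_a‖ − C) > 0. -/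

import Mathlib

open scoped RealInnerProductSpace

/-! Since `p (1 - p / 2) ≤ 1 / 2`, the hypothesis forces `‖g_a‖ ≥ 5 C + 2 ‖g_b‖`. Expanding the
excess risk, the coefficient of `⟪g_a, g_b⟫` is `p_b² + p_b - 1 ∈ [-1, 1]`, so by Cauchy–Schwarz
the cross term costs at most `‖g_a‖ ‖g_b‖`, and the clipped gradient `ḡ`, a convex combination of
vectors in the ball of radius `C`, costs at most `(‖g_a‖ + ‖g_b‖) C`. Multiplying the hypothesis
by `‖g_a‖` absorbs both costs, leaving `(C + p_b (1 + p_b / 2) ‖g_b‖) (‖g_a‖ - ‖g_b‖) ≥ 0`. -/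

section InnerProductSpace

variable {E : Type*} [NormedAddCommGroup E] [InnerProductSpace ℝ E]

theorem norm_smul_add_smul_le_of_norm_le {x y : E} {a b C : ℝ} (ha : 0 ≤ a) (hb : 0 ≤ b)
    (hab : a + b = 1) (hx : ‖x‖ ≤ C) (hy : ‖y‖ ≤ C) : ‖a • x + b • y‖ ≤ C := by
  rw [← mem_closedBall_zero_iff] at hx hy ⊢
  exact convex_closedBall 0 C hx hy ha hb hab

theorem inner_sub_smul_add_smul_sub_half_norm_sq (x y : E) (a b : ℝ) :
    ⟪x - y, a • x + b • y⟫ - (1 / 2) * ‖a • x + b • y‖ ^ 2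
      = a * (1 - a / 2) * ‖x‖ ^ 2 + (b - a - a * b) * ⟪x, y⟫ - b * (1 + b / 2) * ‖y‖ ^ 2 := by
  rw [norm_add_sq_real]
  simp only [inner_sub_left, inner_add_right, real_inner_smul_left, real_inner_smul_right,
    real_inner_self_eq_norm_sq, norm_smul, Real.norm_eq_abs, mul_pow, sq_abs,
    real_inner_comm y x]
  ring

theorem neg_norm_mul_norm_le_mul_inner (x y : E) {c : ℝ} (hc : |c| ≤ 1) :
    -(‖x‖ * ‖y‖) ≤ c * ⟪x, y⟫ := by
  have hcs : |c * ⟪x, y⟫| ≤ ‖x‖ * ‖y‖ := by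
    rw [abs_mul]
    calc |c| * |⟪x, y⟫| ≤ 1 * (‖x‖ * ‖y‖) :=
          mul_le_mul hc (abs_real_inner_le_norm x y) (abs_nonneg _) zero_le_one
      _ = ‖x‖ * ‖y‖ := one_mul _
  exact neg_le_of_abs_le hcs

end InnerProductSpace

theorem abs_sub_sub_mul_le_one {a b : ℝ} (ha : 0 ≤ a) (hb : 0 ≤ b) (hab : a + b = 1) :
    |b - a - a * b| ≤ 1 := by
  have hcoeff : b - a - a * b = b ^ 2 + b - 1 := by
    rw [← sub_eq_of_eq_add' hab.symm]; ring
  rw [hcoeff, abs_le]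
  constructor <;> nlinarith

theorem two_mul_le_of_le_mul_mul_one_sub_half {A X p : ℝ} (hA : 0 ≤ A)
    (h : X ≤ A * p * (1 - p / 2)) : 2 * X ≤ A := by
  nlinarith [mul_nonneg hA (sq_nonneg (1 - p))]

/-- deterministic core of Theorem 3 (gradient clipping). -/
theorem clipping_excessive_risk_core {d : ℕ}
    (ga gb : EuclideanSpace ℝ (Fin d)) (pa pb C : ℝ)
    (hpa : pa ∈ Set.Icc (0 : ℝ) 1) (hpb : pb ∈ Set.Icc (0 : ℝ) 1)
    (hp : pa + pb = 1) (hC : 0 < C)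
    (hmain : ‖ga‖ * pa * (1 - pa / 2)
      ≥ (5 / 2) * C + ‖gb‖ * (1 + pb + pb ^ 2 / 2))
    (gab gbb : EuclideanSpace ℝ (Fin d)) (hga : ‖gab‖ ≤ C) (hgb : ‖gbb‖ ≤ C) :
    ⟪ga - gb, (pa • ga + pb • gb) - (pa • gab + pb • gbb)⟫
        - (1 / 2) * (‖pa • ga + pb • gb‖ ^ 2 + C ^ 2)
      ≥ (C / 2) * (‖ga‖ - C) ∧
    (C / 2) * (‖ga‖ - C) > 0 := by
  set A := ‖ga‖
  set B := ‖gb‖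
  have hB : 0 ≤ B := norm_nonneg gb
  have hpb0 : 0 ≤ pb := hpb.1
  have hgap := two_mul_le_of_le_mul_mul_one_sub_half (norm_nonneg ga) hmain
  have hgb_growth : 0 ≤ B * (pb + pb ^ 2 / 2) := by positivity
  have hBA : B ≤ A := by linarith
  have hCA : C < A := by linarith
  refine ⟨?_, mul_pos (half_pos hC) (sub_pos.2 hCA)⟩
  have hclip : ⟪ga - gb, pa • gab + pb • gbb⟫ ≤ (A + B) * C :=
    (real_inner_le_norm _ _).trans <| mul_le_mul (norm_sub_le ga gb)
      (norm_smul_add_smul_le_of_norm_le hpa.1 hpb0 hp hga hgb) (norm_nonneg _)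
      (add_nonneg (norm_nonneg ga) hB)
  have hcross := neg_norm_mul_norm_le_mul_inner ga gb (abs_sub_sub_mul_le_one hpa.1 hpb0 hp)
  have hexpand := inner_sub_smul_add_smul_sub_half_norm_sq ga gb pa pb
  have hmainA := mul_le_mul_of_nonneg_left hmain (norm_nonneg ga)
  have hrest : 0 ≤ (C + pb * (1 + pb / 2) * B) * (A - B) :=
    mul_nonneg (by positivity) (sub_nonneg.2 hBA)
  rw [inner_sub_right]
  linarith
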